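/- The map Ψ : L²(𝕋ⁿ) → L²(𝕋ⁿ) defined by (Ψf)(ζ) = J(ζ)·f(τ(ζ)), where τ(ζ) = (ζ₁ζ₂⋯ζₙ, ζ₂ζ₃⋯ζₙ, …, ζ_{n−1}ζₙ, ζₙ) and J(ζ) = ∏_{j=2}^{n} ζ_j^{j−1}, is a unitary operator on L²(𝕋ⁿ) whose inverse is (Ψ⁻¹f)(ζ) = (ζ₂⋯ζₙ)^{−1}·f(σ(ζ)) with σ(ζ) = (ζ₁/ζ₂, ζ₂/ζ₃, …, ζ_{n−1}/ζₙ, ζₙ); moreover Ψ maps H²(∂_d△ₙ) onto H²(∂_d𝔻ⁿ). -/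

import Mathlib

open MeasureTheory Filter Topology ComplexConjugate

noncomputable section

instance fact_one_pos : Fact ((0:ℝ) < 1) := ⟨one_pos⟩

abbrev Torus (n : ℕ) := Fin n → AddCircle (1 : ℝ)

abbrev L2T (n : ℕ) := Lp ℂ 2 (volume : Measure (Torus n))

abbrev LinfT (n : ℕ) := Lp ℂ ⊤ (volume : Measure (Torus n))

def char {n : ℕ} (α : Fin n → ℤ) : Torus n → ℂ := fun x => ∏ j, fourier (α j) (x j)

lemma char_continuous {n : ℕ} (α : Fin n → ℤ) : Continuous (char α) :=
  continuous_finsetProd _ fun j _ => (fourier (α j)).continuous.comp (continuous_apply j)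

lemma char_memLp {n : ℕ} (α : Fin n → ℤ) (p : ENNReal) :
    MemLp (char α) p (volume : Measure (Torus n)) := by
  refine (memLp_top_of_bound ((char_continuous α).aestronglyMeasurable) 1 ?_).mono_exponent le_top
  filter_upwards with x
  simp only [char, norm_prod]
  calc ∏ j, ‖fourier (α j) (x j)‖
      = ∏ j : Fin n, (1:ℝ) := by
        refine Finset.prod_congr rfl fun j _ => ?_
        rw [fourier_apply]; exact Circle.norm_coe _
    _ ≤ 1 := by simp

def charL2 {n : ℕ} (α : Fin n → ℤ) : L2T n := (char_memLp α 2).toLp (char α)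

def hardyT (n : ℕ) : Submodule ℂ (L2T n) :=
  (Submodule.span ℂ
    (charL2 '' {α : Fin n → ℤ | ∀ k : Fin n, 0 ≤ (∑ j ∈ Finset.Iic k, α j) + (k.val : ℤ)})).topologicalClosure

def hardyD (n : ℕ) : Submodule ℂ (L2T n) :=
  (Submodule.span ℂ (charL2 '' {α : Fin n → ℤ | ∀ j, 0 ≤ α j})).topologicalClosure

instance hardyT.completeSpace (n : ℕ) : CompleteSpace (hardyT n) :=
  (Submodule.isClosed_topologicalClosure _).completeSpace_coe

instance hardyD.completeSpace (n : ℕ) : CompleteSpace (hardyD n) :=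
  (Submodule.isClosed_topologicalClosure _).completeSpace_coe

def IsToeplitzOn {n : ℕ} (K : Submodule ℂ (L2T n)) (φ : Torus n → ℂ) (T : K →L[ℂ] K) : Prop :=
  ∀ f g : K,
    (inner ℂ ((g : L2T n)) ((T f : L2T n)) : ℂ) =
      ∫ x, conj ((g : L2T n) x) * (φ x * (f : L2T n) x) ∂volume

def IsCoordMult {n : ℕ} (j : Fin n) (M : hardyT n →L[ℂ] hardyT n) : Prop :=
  ∀ f : hardyT n,
    ((M f : L2T n) : Torus n → ℂ) =ᵐ[volume]
      fun x => fourier 1 (x j) * ((f : L2T n) : Torus n → ℂ) x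

def IsHankelT {n : ℕ} (φ : Torus n → ℂ) (H : hardyT n →L[ℂ] L2T n) : Prop :=
  (∀ f : hardyT n, H f ∈ (hardyT n)ᗮ) ∧
    ∀ f : hardyT n, ∀ g : L2T n, g ∈ (hardyT n)ᗮ →
      (inner ℂ g (H f) : ℂ) = ∫ x, conj (g x) * (φ x * (f : L2T n) x) ∂volume

def IsAnalyticSymbolF {n : ℕ} (φ : Torus n → ℂ) : Prop :=
  ∀ α : Fin n → ℤ, (¬ ∀ k : Fin n, 0 ≤ ∑ j ∈ Finset.Iic k, α j) →
    ∫ x, φ x * char (-α) x ∂(volume : Measure (Torus n)) = 0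

def IsInnerSymbolF {n : ℕ} (φ : Torus n → ℂ) : Prop :=
  IsAnalyticSymbolF φ ∧ ∀ᵐ x ∂(volume : Measure (Torus n)), ‖φ x‖ = 1

def tauMap {n : ℕ} (x : Torus n) : Torus n := fun j => ∑ k ∈ Finset.Ici j, x k

def sigmaMap {n : ℕ} (x : Torus n) : Torus n :=
  fun j => if h : (j : ℕ) + 1 < n then x j - x ⟨(j : ℕ) + 1, h⟩ else x j

def jacF {n : ℕ} (x : Torus n) : ℂ := ∏ j : Fin n, fourier (j.val : ℤ) (x j)

def jacInvF {n : ℕ} (x : Torus n) : ℂ :=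
  ∏ j : Fin n, fourier (if j.val = 0 then (0 : ℤ) else -1) (x j)

/-!
`τ` is a continuous automorphism of the compact group `𝕋ⁿ` with inverse `σ`, so it preserves Haar
measure, and `J` is unimodular; hence `f ↦ J · (f ∘ τ)` is an isometry of `L²(𝕋ⁿ)`. The identity
`J · (J' ∘ τ) = 1` for the second multiplier `J'` makes `f ↦ J' · (f ∘ σ)` a right inverse, so `Ψ`
is unitary with that inverse.

On characters `τ` acts by the transpose, `ζ^α ∘ τ = ζ^{Pα}` with `(Pα)_k = α₁ + ⋯ + α_k`, so
`Ψ ζ^α = ζ^β` with `β_k = α₁ + ⋯ + α_k + k − 1`. This index map is a bijection of `ℤⁿ` carrying `𝓘`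
onto `ℤ₊ⁿ`, and a unitary maps the closed span of a set onto the closed span of its image.
-/

open scoped ENNReal

namespace MeasureTheory

variable {α β 𝕜 : Type*} [NormedField 𝕜] [MeasurableSpace α] [MeasurableSpace β]
  {μ : Measure α} {ν : Measure β} {p : ℝ≥0∞} {J : α → 𝕜}

theorem eLpNorm_mul_of_norm_eq_one (hJ1 : ∀ x, ‖J x‖ = 1) (f : α → 𝕜) :
    eLpNorm (fun x => J x * f x) p μ = eLpNorm f p μ :=
  eLpNorm_congr_norm_ae <| .of_forall fun x => by rw [norm_mul, hJ1, one_mul]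

theorem MemLp.mul_of_norm_eq_one (hJ : AEStronglyMeasurable J μ) (hJ1 : ∀ x, ‖J x‖ = 1)
    {f : α → 𝕜} (hf : MemLp f p μ) : MemLp (fun x => J x * f x) p μ :=
  ⟨hJ.mul hf.1, by rw [eLpNorm_mul_of_norm_eq_one hJ1]; exact hf.2⟩

namespace Lp

variable [Fact (1 ≤ p)]

variable (μ p) in
def mulUnimodular (hJ : AEStronglyMeasurable J μ) (hJ1 : ∀ x, ‖J x‖ = 1) :
    Lp 𝕜 p μ →ₗᵢ[𝕜] Lp 𝕜 p μ where
  toFun f := ((Lp.memLp f).mul_of_norm_eq_one hJ hJ1).toLp _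
  map_add' f g := by
    rw [← MemLp.toLp_add]
    refine MemLp.toLp_congr _ _ ?_
    filter_upwards [Lp.coeFn_add f g] with x hx
    simp only [hx, Pi.add_apply, mul_add]
  map_smul' c f := by
    rw [← MemLp.toLp_const_smul]
    refine MemLp.toLp_congr _ _ ?_
    filter_upwards [Lp.coeFn_smul c f] with x hx
    simp only [hx, Pi.smul_apply, smul_eq_mul, RingHom.id_apply]
    ring
  norm_map' f := by
    change ‖((Lp.memLp f).mul_of_norm_eq_one hJ hJ1).toLp _‖ = ‖f‖
    rw [Lp.norm_toLp, Lp.norm_def, eLpNorm_mul_of_norm_eq_one hJ1]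

theorem coeFn_mulUnimodular (hJ : AEStronglyMeasurable J μ) (hJ1 : ∀ x, ‖J x‖ = 1)
    (f : Lp 𝕜 p μ) : mulUnimodular μ p hJ hJ1 f =ᵐ[μ] fun x => J x * f x :=
  MemLp.coeFn_toLp ((Lp.memLp f).mul_of_norm_eq_one hJ hJ1)

variable (p) in
def weightedComp (hJ : AEStronglyMeasurable J μ) (hJ1 : ∀ x, ‖J x‖ = 1) {m : α → β}
    (hm : MeasurePreserving m μ ν) : Lp 𝕜 p ν →ₗᵢ[𝕜] Lp 𝕜 p μ :=
  (mulUnimodular μ p hJ hJ1).comp (compMeasurePreservingₗᵢ 𝕜 m hm)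

theorem coeFn_weightedComp (hJ : AEStronglyMeasurable J μ) (hJ1 : ∀ x, ‖J x‖ = 1) {m : α → β}
    (hm : MeasurePreserving m μ ν) (f : Lp 𝕜 p ν) :
    weightedComp p hJ hJ1 hm f =ᵐ[μ] fun x => J x * f (m x) := by
  filter_upwards [coeFn_mulUnimodular hJ hJ1 (compMeasurePreservingₗᵢ 𝕜 m hm f),
    coeFn_compMeasurePreserving f hm] with x hx hx'
  rw [weightedComp, LinearIsometry.coe_comp, Function.comp_apply, hx]
  exact congrArg (J x * ·) hx'

theorem weightedComp_weightedComp {J₁ : α → 𝕜} {J₂ : β → 𝕜}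
    (hJ₁ : AEStronglyMeasurable J₁ μ) (hJ₁1 : ∀ x, ‖J₁ x‖ = 1)
    (hJ₂ : AEStronglyMeasurable J₂ ν) (hJ₂1 : ∀ y, ‖J₂ y‖ = 1)
    {m₁ : α → β} (hm₁ : MeasurePreserving m₁ μ ν) {m₂ : β → α} (hm₂ : MeasurePreserving m₂ ν μ)
    (hm : ∀ y, m₁ (m₂ y) = y) (hJ : ∀ y, J₂ y * J₁ (m₂ y) = 1) (f : Lp 𝕜 p ν) :
    weightedComp p hJ₂ hJ₂1 hm₂ (weightedComp p hJ₁ hJ₁1 hm₁ f) = f := by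
  ext1
  filter_upwards [coeFn_weightedComp hJ₂ hJ₂1 hm₂ (weightedComp p hJ₁ hJ₁1 hm₁ f),
    hm₂.quasiMeasurePreserving.ae_eq_comp (coeFn_weightedComp hJ₁ hJ₁1 hm₁ f)] with y hy hy'
  simp only [Function.comp_apply] at hy'
  rw [hy, hy', ← mul_assoc, hJ, one_mul, hm]

end Lp

end MeasureTheory

theorem Submodule.topologicalClosure_span_image {𝕜 E F : Type*} [Semiring 𝕜]
    [AddCommMonoid E] [Module 𝕜 E] [TopologicalSpace E] [ContinuousAdd E] [ContinuousConstSMul 𝕜 E]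
    [AddCommMonoid F] [Module 𝕜 F] [TopologicalSpace F] [ContinuousAdd F] [ContinuousConstSMul 𝕜 F]
    (e : E ≃L[𝕜] F) (s : Set E) :
    (span 𝕜 (e '' s)).topologicalClosure = (span 𝕜 s).topologicalClosure.map (e : E →ₗ[𝕜] F) := by
  apply SetLike.coe_injective
  have hspan : span 𝕜 (e '' s) = (span 𝕜 s).map (e : E →ₗ[𝕜] F) := span_image (e : E →ₗ[𝕜] F)
  rw [map_coe, topologicalClosure_coe, topologicalClosure_coe, hspan, map_coe]
  exact (e.toHomeomorph.image_closure _).symm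

open Finset AddCircle

theorem AddCircle.coe_toCircle_sum {T : ℝ} {ι : Type*} (s : Finset ι) (x : ι → AddCircle T) :
    (toCircle (∑ i ∈ s, x i) : ℂ) = ∏ i ∈ s, (toCircle (x i) : ℂ) := by
  induction s using Finset.cons_induction with
  | empty => simp
  | cons i s hi ih => rw [sum_cons, prod_cons, toCircle_add, Circle.coe_mul, ih]

section Torus

variable {n : ℕ}

theorem char_eq_toCircle (α : Fin n → ℤ) (x : Torus n) :
    char α x = toCircle (∑ j, α j • x j) := by
  simp only [char, fourier_apply, coe_toCircle_sum]

theorem sum_smul_tauMap (α : Fin n → ℤ) (x : Torus n) :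
    ∑ j, α j • tauMap x j = ∑ k, (∑ j ∈ Iic k, α j) • x k := by
  simp only [tauMap, smul_sum, sum_smul]
  exact sum_comm' fun j k => by simp [and_comm]

theorem char_tauMap_mul_char (α β : Fin n → ℤ) (x : Torus n) :
    char α (tauMap x) * char β x = char (fun k => (∑ j ∈ Iic k, α j) + β k) x := by
  simp only [char_eq_toCircle, sum_smul_tauMap, ← Circle.coe_mul, ← toCircle_add,
    ← sum_add_distrib, add_smul]

theorem sigmaMap_tauMap (x : Torus n) : sigmaMap (tauMap x) = x := by
  ext j
  by_cases h : (j : ℕ) + 1 < n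
  · have hIci : Ici j = cons j (Ici ⟨j + 1, h⟩) (by simp [Fin.le_def]) := by
      ext k; simp only [mem_Ici, mem_cons, Fin.le_def, Fin.ext_iff]; omega
    simp only [sigmaMap, h, tauMap, hIci, sum_cons, dif_pos, add_sub_cancel_right]
  · have hIci : Ici j = {j} := by
      ext k; simp only [mem_Ici, mem_singleton, Fin.le_def, Fin.ext_iff]; omega
    simp [sigmaMap, h, tauMap, hIci]

theorem tauMap_sigmaMap (x : Torus n) : tauMap (sigmaMap x) = x := by
  ext j
  -- a telescoping sum, once `x` is extended by zero to `ℕ`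
  set y : ℕ → AddCircle (1 : ℝ) := fun m => if h : m < n then x ⟨m, h⟩ else 0
  have hσ (k : Fin n) : sigmaMap x k = y k - y (k + 1) := by
    by_cases h : (k : ℕ) + 1 < n <;> simp [sigmaMap, y, h]
  calc tauMap (sigmaMap x) j = ∑ m ∈ Ico (j : ℕ) n, (y m - y (m + 1)) := by
        simp only [tauMap, hσ, ← Fin.map_valEmbedding_Ici, sum_map, Fin.valEmbedding_apply]
    _ = y j - y n := by
        rw [← neg_sub, ← sum_Ico_sub y j.isLt.le, ← sum_neg_distrib]
        simp only [neg_sub]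
    _ = x j := by simp [y]

theorem tauMap_add (x y : Torus n) : tauMap (x + y) = tauMap x + tauMap y := by
  ext j; simp [tauMap, sum_add_distrib]

theorem sigmaMap_add (x y : Torus n) : sigmaMap (x + y) = sigmaMap x + sigmaMap y := by
  ext j; simp only [sigmaMap, Pi.add_apply]; split_ifs <;> abel

theorem continuous_tauMap : Continuous (tauMap (n := n)) := by
  unfold tauMap; fun_prop

theorem continuous_sigmaMap : Continuous (sigmaMap (n := n)) :=
  continuous_pi fun j => by unfold sigmaMap; split_ifs <;> fun_prop

theorem measurePreserving_tauMap : MeasurePreserving (tauMap (n := n)) :=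
  (AddMonoidHom.mk' _ tauMap_add).measurePreserving continuous_tauMap
    (Function.RightInverse.surjective tauMap_sigmaMap) rfl

theorem measurePreserving_sigmaMap : MeasurePreserving (sigmaMap (n := n)) :=
  (AddMonoidHom.mk' _ sigmaMap_add).measurePreserving continuous_sigmaMap
    (Function.RightInverse.surjective sigmaMap_tauMap) rfl

theorem sum_Iic_ite_val_eq_zero (k : Fin n) :
    ∑ j ∈ Iic k, (if j.val = 0 then (0 : ℤ) else -1) = -k := by
  have hfilter : {j ∈ Iic k | ¬ j.val = 0} = Ioc ⟨0, k.pos⟩ k := by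
    ext j; simp only [mem_filter, mem_Iic, mem_Ioc, Fin.le_def, Fin.lt_def]; omega
  rw [sum_ite, sum_const_zero, zero_add, sum_const, hfilter, Fin.card_Ioc]
  simp

theorem jacF_mul_jacInvF_tauMap (x : Torus n) : jacF x * jacInvF (tauMap x) = 1 := by
  rw [mul_comm]
  refine (char_tauMap_mul_char _ (fun j => (j : ℤ)) x).trans ?_
  simp only [sum_Iic_ite_val_eq_zero, neg_add_cancel]
  simp [char]

def indexShift (α : Fin n → ℤ) : Fin n → ℤ := fun k => (∑ j ∈ Iic k, α j) + (k : ℤ)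

theorem jacF_mul_char_tauMap (α : Fin n → ℤ) (x : Torus n) :
    jacF x * char α (tauMap x) = char (indexShift α) x := by
  rw [mul_comm]
  exact char_tauMap_mul_char α (fun j => (j : ℤ)) x

theorem indexShift_surjective : Function.Surjective (indexShift (n := n)) := by
  intro β
  -- `d (k + 1) = β k - k` and `d 0 = 0`, so the partial sums of the differences of `d` telescope
  set d : ℕ → ℤ := fun m => if h : 0 < m ∧ m ≤ n then β ⟨m - 1, by omega⟩ - (m - 1 : ℕ) else 0
  refine ⟨fun j => d (j + 1) - d j, funext fun k => ?_⟩
  have htel : ∑ j ∈ Iic k, (d (j + 1) - d j) = d (k + 1) - d 0 := by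
    rw [← sum_range_sub, Nat.range_succ_eq_Iic, ← Fin.map_valEmbedding_Iic, sum_map]
    rfl
  simp only [indexShift, htel]
  simp [d]

theorem norm_char (α : Fin n → ℤ) (x : Torus n) : ‖char α x‖ = 1 := by
  rw [char_eq_toCircle, Circle.norm_coe]

def psi : L2T n →ₗᵢ[ℂ] L2T n :=
  Lp.weightedComp (J := jacF) 2 (char_continuous _).aestronglyMeasurable (norm_char _)
    measurePreserving_tauMap

def psiInv : L2T n →ₗᵢ[ℂ] L2T n :=
  Lp.weightedComp (J := jacInvF) 2 (char_continuous _).aestronglyMeasurable (norm_char _)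
    measurePreserving_sigmaMap

theorem coeFn_psi (f : L2T n) : psi f =ᵐ[volume] fun x => jacF x * f (tauMap x) :=
  Lp.coeFn_weightedComp _ _ _ f

theorem coeFn_psiInv (f : L2T n) : psiInv f =ᵐ[volume] fun x => jacInvF x * f (sigmaMap x) :=
  Lp.coeFn_weightedComp _ _ _ f

theorem psi_psiInv (f : L2T n) : psi (psiInv f) = f :=
  Lp.weightedComp_weightedComp _ _ _ _ _ _ sigmaMap_tauMap jacF_mul_jacInvF_tauMap f

def psiEquiv : L2T n ≃ₗᵢ[ℂ] L2T n :=
  .ofSurjective psi (Function.RightInverse.surjective psi_psiInv)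

theorem psiEquiv_symm_apply (f : L2T n) : psiEquiv.symm f = psiInv f :=
  psiEquiv.symm_apply_eq.2 (psi_psiInv f).symm

theorem coeFn_charL2 (α : Fin n → ℤ) : charL2 α =ᵐ[volume] char α :=
  MemLp.coeFn_toLp _

theorem psi_charL2 (α : Fin n → ℤ) : psi (charL2 α) = charL2 (indexShift α) := by
  ext1
  filter_upwards [coeFn_psi (charL2 α),
    measurePreserving_tauMap.quasiMeasurePreserving.ae_eq_comp (coeFn_charL2 α),
    coeFn_charL2 (indexShift α)] with x hψ hτ hβ
  rw [hψ, hβ, ← jacF_mul_char_tauMap]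
  exact congrArg (jacF x * ·) hτ

theorem psiEquiv_image_charL2 :
    psiEquiv '' (charL2 '' {α : Fin n → ℤ | ∀ k : Fin n, 0 ≤ (∑ j ∈ Iic k, α j) + (k.val : ℤ)}) =
      charL2 '' {β | ∀ j, 0 ≤ β j} := by
  have hT : {α : Fin n → ℤ | ∀ k : Fin n, 0 ≤ (∑ j ∈ Iic k, α j) + (k.val : ℤ)} =
      indexShift ⁻¹' {β | ∀ j, 0 ≤ β j} := rfl
  rw [Set.image_image, hT]
  simp only [psiEquiv, LinearIsometryEquiv.coe_ofSurjective, psi_charL2]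
  rw [← Set.image_image charL2 indexShift, Set.image_preimage_eq _ indexShift_surjective]

theorem map_psiEquiv_hardyT :
    (hardyT n).map (psiEquiv (n := n)).toLinearEquiv.toLinearMap = hardyD n := by
  rw [hardyD, ← psiEquiv_image_charL2]
  exact (Submodule.topologicalClosure_span_image psiEquiv.toContinuousLinearEquiv _).symm

theorem mem_hardyT_iff (f : L2T n) : f ∈ hardyT n ↔ psiEquiv f ∈ hardyD n := by
  rw [← map_psiEquiv_hardyT, Submodule.mem_map_equiv]
  simp

end Torus

theorem stmt7 {n : ℕ} :
    ∃ Ψ : L2T n ≃ₗᵢ[ℂ] L2T n,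
      (∀ f : L2T n, (⇑(Ψ f) : Torus n → ℂ) =ᵐ[volume] fun x => jacF x * f (tauMap x)) ∧
      (∀ f : L2T n, (⇑(Ψ.symm f) : Torus n → ℂ) =ᵐ[volume] fun x => jacInvF x * f (sigmaMap x)) ∧
      (∀ f : L2T n, f ∈ hardyT n ↔ Ψ f ∈ hardyD n) :=
  ⟨psiEquiv, coeFn_psi, fun f => psiEquiv_symm_apply f ▸ coeFn_psiInv f, mem_hardyT_iff⟩
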